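/- arXiv:1401.5595 — 4 statements merged into one kernel-verified Lean document; each statement's English description precedes it below -/
import Mathlib

section
/- Asymptotic expansion of the single-level jump rates: Fix an integer N ≥ 1, a real θ > 0, an index a ∈ {1, …, N}, and reals δ > 0, M > 0. For ε > 0 and y ∈ ℝ^N with y_1 < y_2 < ⋯ < y_N define P_ε(y, a) := ε^{−1} · ∏_{b=1}^{a−1} [ ((y_a − y_b)ε^{−1/2} + θ(a−b+1)) / ((y_a − y_b)ε^{−1/2} + θ(a−b)) ] · ∏_{b=a+1}^{N} [ ((y_b − y_a)ε^{−1/2} + θ(b−a−1)) / ((y_b − y_a)ε^{−1/2} + θ(b−a)) ]. Then there exist constants C > 0 and ε_0 > 0 such that for all ε ∈ (0, ε_0) and all y with y_1 < ⋯ < y_N and y_{j+1} − y_j ≥ δ for all j, one has | P_ε(y, a) − ε^{−1} − ε^{−1/2} Σ_{b≠a} θ/(y_a − y_b) | ≤ C. -/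
/-!
Put `s = ε^(-1/2)`, so that `ε⁻¹ = s²`. Negating numerator and denominator of the factors with
`b > a` puts every factor of the rate in the form `1 + t_b` with
`t_b = θ / ((y_a - y_b) s + θ (a - b))`. The two summands of this denominator have the same sign,
so `|t_b| ≤ θ / (δ s)`. The second-order expansion of a product then gives
`s² ∏ (1 + t_b) = s² + s² ∑ t_b + O(1)`, and `s² t_b = s θ / (y_a - y_b) + O(1)` termwise.
-/

open Finset Real

section ProductExpansion

variable {ι R : Type*} [NormedCommRing R] [NormOneClass R]

theorem Finset.norm_prod_one_add_sub_one_sub_sum_le (T : Finset ι) (f : ι → R) :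
    ‖∏ i ∈ T, (1 + f i) - 1 - ∑ i ∈ T, f i‖ ≤
      exp (∑ i ∈ T, ‖f i‖) - 1 - ∑ i ∈ T, ‖f i‖ := by
  classical
  induction T using Finset.induction_on with
  | empty => simp
  | insert c T hc IH =>
    rw [prod_insert hc, sum_insert hc, sum_insert hc, exp_add,
      show (1 + f c) * ∏ i ∈ T, (1 + f i) - 1 - (f c + ∑ i ∈ T, f i) =
        (∏ i ∈ T, (1 + f i) - 1 - ∑ i ∈ T, f i) + f c * (∏ i ∈ T, (1 + f i) - 1) by ring]
    -- with `A = ∑ ‖f i‖` and `a = ‖f c‖`, the slack is `exp A * (exp a - 1 - a) ≥ 0`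
    refine (norm_add_le_of_le IH (norm_mul_le_of_le le_rfl (T.norm_prod_one_add_sub_one_le f))).trans ?_
    nlinarith [add_one_le_exp ‖f c‖, exp_pos (∑ i ∈ T, ‖f i‖)]

theorem Finset.norm_prod_one_add_sub_one_sub_sum_le_sq (T : Finset ι) (f : ι → R)
    (hf : ∑ i ∈ T, ‖f i‖ ≤ 1) :
    ‖∏ i ∈ T, (1 + f i) - 1 - ∑ i ∈ T, f i‖ ≤ (∑ i ∈ T, ‖f i‖) ^ 2 :=
  (T.norm_prod_one_add_sub_one_sub_sum_le f).trans <| (le_abs_self _).trans <|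
    abs_exp_sub_one_sub_id_le <| by rwa [abs_of_nonneg (sum_nonneg fun _ _ ↦ norm_nonneg _)]

end ProductExpansion

section RateFactor

variable {θ s u k : ℝ}

theorem abs_mul_le_abs_mul_add_mul (hθ : 0 ≤ θ) (huk : 0 ≤ u * k) (s : ℝ) :
    |u| * s ≤ |u * s + θ * k| := by
  rcases eq_or_ne u 0 with rfl | hu
  · simpa using abs_nonneg (θ * k)
  have hu' : 0 < |u| := abs_pos.mpr hu
  refine le_of_mul_le_mul_right ?_ hu'
  calc |u| * s * |u| = u ^ 2 * s := by rw [mul_right_comm, ← sq, sq_abs]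
    _ ≤ (u * s + θ * k) * u := by nlinarith [mul_nonneg hθ huk]
    _ ≤ |u * s + θ * k| * |u| := by rw [← abs_mul]; exact le_abs_self _

theorem abs_div_mul_add_mul_le (hθ : 0 ≤ θ) (hs : 0 < s) (huk : 0 ≤ u * k) (hu : u ≠ 0) :
    |θ / (u * s + θ * k)| ≤ θ / (|u| * s) := by
  rw [abs_div, abs_of_nonneg hθ]
  have := abs_mul_le_abs_mul_add_mul hθ huk s
  gcongr

theorem abs_sq_mul_div_sub_le (hθ : 0 ≤ θ) (hs : 0 < s) (huk : 0 ≤ u * k) (hu : u ≠ 0) :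
    |s ^ 2 * (θ / (u * s + θ * k)) - s * (θ / u)| ≤ θ ^ 2 * |k| / u ^ 2 := by
  have hD := abs_mul_le_abs_mul_add_mul hθ huk s
  have hu' : 0 < |u| := abs_pos.mpr hu
  have hD0 : u * s + θ * k ≠ 0 := abs_pos.mp (lt_of_lt_of_le (by positivity) hD)
  have key : s ^ 2 * (θ / (u * s + θ * k)) - s * (θ / u) =
      -(s * θ ^ 2 * k) / ((u * s + θ * k) * u) := by
    rw [mul_div_assoc', mul_div_assoc', div_sub_div _ _ hD0 hu, neg_div, ← div_neg,
      div_eq_div_iff (mul_ne_zero hD0 hu) (neg_ne_zero.mpr (mul_ne_zero hD0 hu))]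
    ring
  rw [key, abs_div, abs_neg, abs_mul, abs_mul, abs_mul, abs_of_pos hs, abs_of_nonneg (sq_nonneg θ),
    ← sq_abs u, div_le_div_iff₀ (by positivity) (by positivity)]
  calc s * θ ^ 2 * |k| * |u| ^ 2 = θ ^ 2 * |k| * (|u| * s * |u|) := by ring
    _ ≤ θ ^ 2 * |k| * (|u * s + θ * k| * |u|) := by gcongr

end RateFactor

theorem abs_sq_mul_prod_one_add_div_sub_le {ι : Type*} (T : Finset ι) {u k : ι → ℝ}
    {θ s δ K : ℝ} (hθ : 0 ≤ θ) (hδ : 0 < δ) (hs : 0 < s) (hu : ∀ b ∈ T, δ ≤ |u b|)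
    (huk : ∀ b ∈ T, 0 ≤ u b * k b) (hk : ∀ b ∈ T, |k b| ≤ K) (hT : #T ≤ K)
    (hθs : K * θ ≤ δ * s) :
    |s ^ 2 * ∏ b ∈ T, (1 + θ / (u b * s + θ * k b)) - s ^ 2 - s * ∑ b ∈ T, θ / u b| ≤
      2 * (K * θ / δ) ^ 2 := by
  set t : ι → ℝ := fun b ↦ θ / (u b * s + θ * k b)
  have hu0 : ∀ b ∈ T, u b ≠ 0 := fun b hb ↦ abs_pos.mp (hδ.trans_le (hu b hb))
  have hK : 0 ≤ K := (Nat.cast_nonneg _).trans hT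
  have ht : ∀ b ∈ T, |t b| ≤ θ / (δ * s) := fun b hb ↦
    (abs_div_mul_add_mul_le hθ hs (huk b hb) (hu0 b hb)).trans (by gcongr; exact hu b hb)
  have hsum : ∑ b ∈ T, |t b| ≤ K * θ / (δ * s) := by
    grw [sum_le_sum ht, sum_const, nsmul_eq_mul, hT, mul_div_assoc]
  have hquad : |∏ b ∈ T, (1 + t b) - 1 - ∑ b ∈ T, t b| ≤ (K * θ / (δ * s)) ^ 2 := by
    have := T.norm_prod_one_add_sub_one_sub_sum_le_sq t
      (hsum.trans (div_le_one_of_le₀ hθs (by positivity)))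
    simp only [Real.norm_eq_abs] at this
    exact this.trans (pow_le_pow_left₀ (sum_nonneg fun _ _ ↦ abs_nonneg _) hsum 2)
  have hlin : ∀ b ∈ T, |s ^ 2 * t b - s * (θ / u b)| ≤ θ ^ 2 * K / δ ^ 2 := fun b hb ↦
    (abs_sq_mul_div_sub_le hθ hs (huk b hb) (hu0 b hb)).trans (by
      rw [← sq_abs (u b)]
      gcongr
      exacts [hk b hb, hu b hb])
  calc _ = |s ^ 2 * (∏ b ∈ T, (1 + t b) - 1 - ∑ b ∈ T, t b) +
          ∑ b ∈ T, (s ^ 2 * t b - s * (θ / u b))| := by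
        rw [sum_sub_distrib, ← mul_sum, ← mul_sum]
        simp only [t]
        ring_nf
    _ ≤ s ^ 2 * (K * θ / (δ * s)) ^ 2 + K * (θ ^ 2 * K / δ ^ 2) := by
        refine abs_add_le _ _ |>.trans (add_le_add ?_ ?_)
        · rw [abs_mul, abs_of_pos (by positivity)]
          gcongr
        · grw [abs_sum_le_sum_abs, sum_le_sum hlin, sum_const, nsmul_eq_mul, hT]
    _ = 2 * (K * θ / δ) ^ 2 := by
        field_simp
        ring

theorem Finset.prod_Iio_mul_prod_Ioi {α M : Type*} [CommMonoid M] [LinearOrder α] [Fintype α]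
    [LocallyFiniteOrderTop α] [LocallyFiniteOrderBot α] (f : α → M) (a : α) :
    (∏ b ∈ Iio a, f b) * ∏ b ∈ Ioi a, f b = ∏ b ∈ univ.erase a, f b := by
  rw [← compl_singleton, ← Ioi_disjUnion_Iio, prod_disjUnion, mul_comm]

theorem rpow_neg_one_half_sq {ε : ℝ} (hε : 0 ≤ ε) : (ε ^ (-(1 : ℝ) / 2)) ^ 2 = ε⁻¹ := by
  rw [← rpow_natCast, ← rpow_mul hε]
  norm_num [rpow_neg_one]

theorem le_mul_rpow_neg_one_half {c δ ε : ℝ} (hc : 0 < c) (hδ : 0 ≤ δ) (hε : 0 < ε)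
    (h : ε ≤ (δ / c) ^ 2) : c ≤ δ * ε ^ (-(1 : ℝ) / 2) := by
  refine (pow_le_pow_iff_left₀ hc.le (by positivity) two_ne_zero).mp ?_
  rw [mul_pow δ, rpow_neg_one_half_sq hε.le, ← div_eq_mul_inv, le_div_iff₀ hε,
    ← le_div_iff₀' (by positivity), ← div_pow]
  exact h

section Gaps

variable {N : ℕ} {y : Fin N → ℝ} {δ : ℝ}

theorem le_sub_of_lt_of_forall_adjacent_le (hy : Monotone y)
    (hgap : ∀ i j : Fin N, (j : ℕ) = (i : ℕ) + 1 → δ ≤ y j - y i) {i j : Fin N} (hij : i < j) :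
    δ ≤ y j - y i := by
  let i' : Fin N := ⟨i + 1, by omega⟩
  have := hgap i i' rfl
  have := hy (show i' ≤ j from Fin.mk_le_of_le_val hij)
  linarith

theorem le_abs_sub_of_ne_of_forall_adjacent_le (hy : Monotone y)
    (hgap : ∀ i j : Fin N, (j : ℕ) = (i : ℕ) + 1 → δ ≤ y j - y i) {i j : Fin N} (hij : i ≠ j) :
    δ ≤ |y i - y j| := by
  rcases hij.lt_or_gt with h | h
  · rw [abs_sub_comm]
    exact (le_sub_of_lt_of_forall_adjacent_le hy hgap h).trans (le_abs_self _)
  · exact (le_sub_of_lt_of_forall_adjacent_le hy hgap h).trans (le_abs_self _)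

end Gaps

theorem single_level_rate_expansion_general (N : ℕ) (hN : 1 ≤ N) (θ : ℝ) (hθ : 0 < θ)
    (a : Fin N) (δ : ℝ) (hδ : 0 < δ) :
    ∃ C > 0, ∃ ε₀ > 0, ∀ ε : ℝ, 0 < ε → ε < ε₀ →
      ∀ y : Fin N → ℝ, StrictMono y →
        (∀ i j : Fin N, (j : ℕ) = (i : ℕ) + 1 → δ ≤ y j - y i) →
        |ε⁻¹ *
            (∏ b ∈ Finset.Iio a,
              ((y a - y b) * ε ^ (-(1 : ℝ) / 2) + θ * ((a : ℝ) - (b : ℝ) + 1)) /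
                ((y a - y b) * ε ^ (-(1 : ℝ) / 2) + θ * ((a : ℝ) - (b : ℝ)))) *
            (∏ b ∈ Finset.Ioi a,
              ((y b - y a) * ε ^ (-(1 : ℝ) / 2) + θ * ((b : ℝ) - (a : ℝ) - 1)) /
                ((y b - y a) * ε ^ (-(1 : ℝ) / 2) + θ * ((b : ℝ) - (a : ℝ)))) -
          ε⁻¹ -
          ε ^ (-(1 : ℝ) / 2) * ∑ b ∈ Finset.univ.erase a, θ / (y a - y b)| ≤ C := by
  have hNθ : 0 < N * θ := by positivity
  refine ⟨2 * (N * θ / δ) ^ 2, by positivity, (δ / (N * θ)) ^ 2, by positivity, ?_⟩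
  intro ε hε hε₀ y hy hgap
  set s := ε ^ (-(1 : ℝ) / 2)
  have hs : 0 < s := rpow_pos_of_pos hε _
  have hθs : N * θ ≤ δ * s := le_mul_rpow_neg_one_half hNθ hδ.le hε hε₀.le
  have hu : ∀ b ∈ univ.erase a, δ ≤ |y a - y b| := fun b hb ↦
    le_abs_sub_of_ne_of_forall_adjacent_le hy.monotone hgap (ne_of_mem_erase hb).symm
  have huk : ∀ b, 0 ≤ (y a - y b) * ((a : ℝ) - b) :=
    fun b ↦ (hy.monotone.monovary (Nat.mono_cast.comp Fin.val_strictMono.monotone)).sub_mul_sub_nonneg b a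
  have hk : ∀ b : Fin N, |(a : ℝ) - b| ≤ N := fun b ↦
    (abs_sub_lt_of_nonneg_of_lt (Nat.cast_nonneg _) (by simp) (Nat.cast_nonneg _) (by simp)).le
  have hD : ∀ b ≠ a, (y a - y b) * s + θ * ((a : ℝ) - b) ≠ 0 := fun b hb ↦ abs_pos.mp <|
    (mul_pos (hδ.trans_le (hu b (mem_erase.2 ⟨hb, mem_univ _⟩))) hs).trans_le
      (abs_mul_le_abs_mul_add_mul hθ.le (huk b) s)
  rw [← rpow_neg_one_half_sq hε.le, mul_assoc,
    prod_congr (s₁ := Iio a) rfl (g := fun b ↦ 1 + θ / ((y a - y b) * s + θ * ((a : ℝ) - b))),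
    prod_congr (s₁ := Ioi a) rfl (g := fun b ↦ 1 + θ / ((y a - y b) * s + θ * ((a : ℝ) - b))),
    prod_Iio_mul_prod_Ioi]
  · exact abs_sq_mul_prod_one_add_div_sub_le _ hθ.le hδ hs hu (fun b _ ↦ huk b) (fun b _ ↦ hk b)
      (by simp) hθs
  · intro b hb
    rw [← same_add_div (hD b (mem_Ioi.1 hb).ne'), ← neg_div_neg_eq]
    congr 1 <;> ring
  · intro b hb
    rw [← same_add_div (hD b (mem_Iio.1 hb).ne)]
    ring

/-- **Asymptotic expansion of the single-level jump rates.** For the jump rate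
`P_ε(y,a) = ε⁻¹ ∏_{b<a} [((y_a−y_b)ε^{−1/2}+θ(a−b+1))/((y_a−y_b)ε^{−1/2}+θ(a−b))]
  ∏_{b>a} [((y_b−y_a)ε^{−1/2}+θ(b−a−1))/((y_b−y_a)ε^{−1/2}+θ(b−a))]`
one has `P_ε(y,a) = ε⁻¹ + ε^{−1/2} Σ_{b≠a} θ/(y_a−y_b) + O(1)`, uniformly over
configurations with adjacent gaps at least `δ`. -/
theorem single_level_rate_expansion (N : ℕ) (hN : 1 ≤ N) (θ : ℝ) (hθ : 0 < θ)
    (a : Fin N) (δ M : ℝ) (hδ : 0 < δ) (hM : 0 < M) :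
    ∃ C > 0, ∃ ε₀ > 0, ∀ ε : ℝ, 0 < ε → ε < ε₀ →
      ∀ y : Fin N → ℝ, StrictMono y →
        (∀ i j : Fin N, (j : ℕ) = (i : ℕ) + 1 → δ ≤ y j - y i) →
        |ε⁻¹ *
            (∏ b ∈ Finset.Iio a,
              ((y a - y b) * ε ^ (-(1 : ℝ) / 2) + θ * ((a : ℝ) - (b : ℝ) + 1)) /
                ((y a - y b) * ε ^ (-(1 : ℝ) / 2) + θ * ((a : ℝ) - (b : ℝ)))) *
            (∏ b ∈ Finset.Ioi a,
              ((y b - y a) * ε ^ (-(1 : ℝ) / 2) + θ * ((b : ℝ) - (a : ℝ) - 1)) /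
                ((y b - y a) * ε ^ (-(1 : ℝ) / 2) + θ * ((b : ℝ) - (a : ℝ)))) -
          ε⁻¹ -
          ε ^ (-(1 : ℝ) / 2) * ∑ b ∈ Finset.univ.erase a, θ / (y a - y b)| ≤ C :=
  single_level_rate_expansion_general N hN θ hθ a δ hδ
end

section
/- Asymptotic expansion of the multilevel jump rates: Fix integers 1 ≤ i ≤ k ≤ N, a real θ > 0, and a real δ > 0. For ε > 0 and reals ŷ^k_1 > ŷ^k_2 > ⋯ > ŷ^k_k and ŷ^{k−1}_1 > ⋯ > ŷ^{k−1}_{k−1} satisfying the strict interlacing ŷ^k_m > ŷ^{k−1}_m > ŷ^k_{m+1} define Q_ε := ε^{−1} · ∏_{m=1}^{i−1} [ ((ŷ^k_m − ŷ^k_i)ε^{−1/2} − 1 + θ(i−m+1)) / ((ŷ^k_m − ŷ^k_i)ε^{−1/2} + θ(i−m)) ] · [ ((ŷ^{k−1}_m − ŷ^k_i)ε^{−1/2} + θ(i−1−m)) / ((ŷ^{k−1}_m − ŷ^k_i)ε^{−1/2} − 1 + θ(i−m)) ] · ∏_{n=i}^{k−1} [ ((ŷ^k_i − ŷ^k_{n+1})ε^{−1/2}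 + θ(n−i) + 1) / ((ŷ^k_i − ŷ^k_{n+1})ε^{−1/2} + θ(n−i+1)) ] · [ ((ŷ^k_i − ŷ^{k−1}_n)ε^{−1/2} + θ(n−i+1)) / ((ŷ^k_i − ŷ^{k−1}_n)ε^{−1/2} + θ(n−i) + 1) ]. Then there exist constants C > 0 and ε_0 > 0 such that for all ε ∈ (0, ε_0) and all such configurations whose pairwise distances |ŷ^k_m − ŷ^k_{m'}| (m ≠ m'), |ŷ^{k−1}_m − ŷ^{k−1}_{m'}| (m ≠ m'), and |ŷ^k_m − ŷ^{k−1}_{m'}| are all at least δ, one has | Q_ε − ε^{−1} − ε^{−1/2} ( Σ_{m=1}^{i−1} [ (θ−1)/(ŷ^k_m − ŷ^k_i) + (1−θ)/(ŷ^{k−1}_m − ŷ^k_i) ] + Σ_{n=i}^{k−1} [ (1−θ)/(ŷ^k_i − ŷ^k_{n+1}) + (θ−1)/(ŷ^k_i − ŷ^{k−1}_n) ] ) | ≤ C. -/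
/-!
Write `t = ε^{-1/2}`. Each factor of the jump rate has the shape `(d t + a) / (d t + b)` with
constants `a, b` and `|d| ≥ δ`, so it equals `1 + (a - b) / (d t) + O(t⁻²)`, uniformly over
`δ`-separated configurations. Such first-order expansions multiply with their first-order
coefficients adding up, so the product of all factors is `1 + c / t + O(t⁻²)` where `c` is the
bracketed sum of the statement, and multiplying by `ε⁻¹ = t²` leaves an `O(1)` error.
Uniformity in the configuration is expressed by working along the filter `𝓝[>] 0 ×ˢ 𝓟 S`,
with `S` the set of separated configurations.
-/

open Filter Topology Asymptotics

variable {α : Type*} {l : Filter α}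

theorem abs_add_div_add_sub_one_sub_div_le {x a b : ℝ} (hx : x ≠ 0) (hb : 2 * |b| ≤ |x|) :
    |(x + a) / (x + b) - 1 - (a - b) / x| ≤ 2 * |a - b| * |b| / x ^ 2 := by
  have hx0 := abs_pos.2 hx
  have hxb : |x| / 2 ≤ |x + b| := by linarith [abs_sub_abs_le_abs_add x b]
  have hxb0 : x + b ≠ 0 := abs_pos.1 (by linarith)
  have key : (x + a) / (x + b) - 1 - (a - b) / x = -((a - b) * b) / (x * (x + b)) := by
    field_simp; ring
  rw [key, abs_div, abs_neg, abs_mul, abs_mul, ← sq_abs x]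
  calc |a - b| * |b| / (|x| * |x + b|) ≤ |a - b| * |b| / (|x| * (|x| / 2)) := by gcongr
    _ = 2 * |a - b| * |b| / |x| ^ 2 := by field_simp

def HasFirstOrderExpansion (l : Filter α) (u f c : α → ℝ) : Prop :=
  c =O[l] (fun _ => (1 : ℝ)) ∧ (fun p => f p - 1 - c p * u p) =O[l] fun p => u p ^ 2

namespace HasFirstOrderExpansion

variable {u f g c d : α → ℝ}

theorem congr {f' c' : α → ℝ} (h : HasFirstOrderExpansion l u f c) (hf : ∀ p, f p = f' p)
    (hc : ∀ p, c p = c' p) : HasFirstOrderExpansion l u f' c' := by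
  obtain rfl : f = f' := funext hf
  obtain rfl : c = c' := funext hc
  exact h

theorem one : HasFirstOrderExpansion l u (fun _ => 1) (fun _ => 0) :=
  ⟨isBigO_zero _ _, by simpa using isBigO_zero _ _⟩

theorem sub_one_isBigO (hu : Tendsto u l (𝓝 0)) (h : HasFirstOrderExpansion l u f c) :
    (fun p => f p - 1) =O[l] u := by
  have hu2 : (fun p => u p ^ 2) =O[l] u := by
    simpa [sq] using (isBigO_refl u l).mul (hu.isBigO_one ℝ)
  have hcu : (fun p => c p * u p) =O[l] u := by
    simpa using h.1.mul (isBigO_refl u l)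
  simpa using (h.2.trans hu2).add hcu

theorem mul (hu : Tendsto u l (𝓝 0)) (hf : HasFirstOrderExpansion l u f c)
    (hg : HasFirstOrderExpansion l u g d) :
    HasFirstOrderExpansion l u (fun p => f p * g p) (fun p => c p + d p) := by
  refine ⟨hf.1.add hg.1, ?_⟩
  have hg1 := hg.sub_one_isBigO hu
  have hgO : g =O[l] (fun _ => (1 : ℝ)) := by
    simpa using (hg1.trans (hu.isBigO_one ℝ)).add (isBigO_refl (fun _ => (1 : ℝ)) l)
  have hcg : (fun p => c p * u p * (g p - 1)) =O[l] fun p => u p ^ 2 := by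
    simpa [sq, mul_assoc] using (hf.1.mul (isBigO_refl u l)).mul hg1
  have hfg : (fun p => (f p - 1 - c p * u p) * g p) =O[l] fun p => u p ^ 2 := by
    simpa using hf.2.mul hgO
  have key : ∀ p, f p * g p - 1 - (c p + d p) * u p =
      (f p - 1 - c p * u p) * g p + (g p - 1 - d p * u p) + c p * u p * (g p - 1) := by
    intro p; ring
  simpa only [key] using (hfg.add hg.2).add hcg

theorem prod {ι : Type*} {f c : ι → α → ℝ} (hu : Tendsto u l (𝓝 0)) {s : Finset ι}
    (h : ∀ j ∈ s, HasFirstOrderExpansion l u (f j) (c j)) :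
    HasFirstOrderExpansion l u (fun p => ∏ j ∈ s, f j p) (fun p => ∑ j ∈ s, c j p) := by
  induction s using Finset.cons_induction with
  | empty => simpa using one
  | cons a s ha ih =>
    simp only [Finset.prod_cons, Finset.sum_cons]
    exact (h a (s.mem_cons_self a)).mul hu (ih fun j hj => h j (Finset.mem_cons_of_mem hj))

theorem sq_mul_sub_isBigO_one {t : α → ℝ}
    (h : HasFirstOrderExpansion l (fun p => (t p)⁻¹) f c) (ht : ∀ᶠ p in l, t p ≠ 0) :
    (fun p => t p ^ 2 * f p - t p ^ 2 - t p * c p) =O[l] fun _ => (1 : ℝ) := by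
  refine ((isBigO_refl (fun p => t p ^ 2) l).mul h.2).congr' ?_ ?_ <;>
    filter_upwards [ht] with p hp <;> field_simp

end HasFirstOrderExpansion

theorem hasFirstOrderExpansion_ratio {t d : α → ℝ} (a b : ℝ) {δ : ℝ} (hδ : 0 < δ)
    (ht : Tendsto t l atTop) (hd : ∀ᶠ p in l, δ ≤ |d p|) :
    HasFirstOrderExpansion l (fun p => (t p)⁻¹) (fun p => (d p * t p + a) / (d p * t p + b))
      (fun p => (a - b) / d p) := by
  constructor
  · refine IsBigO.of_bound (|a - b| / δ) (hd.mono fun p hp => ?_)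
    rw [norm_one, mul_one, Real.norm_eq_abs, abs_div]
    exact div_le_div_of_nonneg_left (abs_nonneg _) hδ hp
  · refine IsBigO.of_bound (2 * |a - b| * |b| / δ ^ 2) ?_
    filter_upwards [hd, ht.eventually_gt_atTop 0, ht.eventually_ge_atTop (2 * |b| / δ)]
      with p hdp htp hbt
    have hd0 : d p ≠ 0 := abs_pos.1 (hδ.trans_le hdp)
    have hx : δ * t p ≤ |d p * t p| := by
      rw [abs_mul, abs_of_pos htp]; gcongr
    have hb : 2 * |b| ≤ |d p * t p| := le_trans (by rwa [div_le_iff₀' hδ] at hbt) hx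
    have hc : (a - b) / d p * (t p)⁻¹ = (a - b) / (d p * t p) := by field_simp
    rw [Real.norm_eq_abs, Real.norm_eq_abs, hc]
    refine (abs_add_div_add_sub_one_sub_div_le (mul_ne_zero hd0 htp.ne') hb).trans ?_
    rw [abs_pow, abs_inv, abs_of_pos htp, inv_pow, ← div_eq_mul_inv, div_div]
    gcongr
    rw [← mul_pow, ← sq_abs (d p * t p)]
    gcongr

theorem exists_bound_of_isBigO_nhdsGT_prod_principal {β : Type*} {S : Set β} {F : ℝ × β → ℝ}
    (h : F =O[𝓝[>] 0 ×ˢ 𝓟 S] fun _ => (1 : ℝ)) :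
    ∃ C > 0, ∃ ε₀ > 0, ∀ ε : ℝ, 0 < ε → ε < ε₀ → ∀ q ∈ S, |F (ε, q)| ≤ C := by
  obtain ⟨C, hC⟩ := h.bound
  obtain ⟨ε₀, hε₀, hsub⟩ :=
    mem_nhdsGT_iff_exists_Ioo_subset.1 (eventually_prod_principal_iff.1 hC)
  refine ⟨max C 1, by positivity, ε₀, hε₀, fun ε hε hεε₀ q hq => ?_⟩
  have hbound : ‖F (ε, q)‖ ≤ C * ‖(1 : ℝ)‖ := hsub ⟨hε, hεε₀⟩ q hq
  rw [norm_one, mul_one, Real.norm_eq_abs] at hbound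
  exact hbound.trans (le_max_left _ _)

/-- With `t = ε^{-1/2}`, the jump rate `Q_ε` is `ε⁻¹ * jumpRateProduct i θ t y z`. -/
noncomputable def jumpRateProduct {κ : ℕ} (i : Fin (κ + 1)) (θ t : ℝ) (y : Fin (κ + 1) → ℝ)
    (z : Fin κ → ℝ) : ℝ :=
  (∏ m ∈ Finset.univ.filter (fun m : Fin κ => (m : ℕ) < (i : ℕ)),
      (((y m.castSucc - y i) * t - 1 + θ * ((i : ℝ) - (m : ℝ) + 1)) /
          ((y m.castSucc - y i) * t + θ * ((i : ℝ) - (m : ℝ)))) *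
        (((z m - y i) * t + θ * ((i : ℝ) - 1 - (m : ℝ))) /
          ((z m - y i) * t - 1 + θ * ((i : ℝ) - (m : ℝ))))) *
    (∏ n ∈ Finset.univ.filter (fun n : Fin κ => (i : ℕ) ≤ (n : ℕ)),
      (((y i - y n.succ) * t + θ * ((n : ℝ) - (i : ℝ)) + 1) /
          ((y i - y n.succ) * t + θ * ((n : ℝ) - (i : ℝ) + 1))) *
        (((y i - z n) * t + θ * ((n : ℝ) - (i : ℝ) + 1)) /
          ((y i - z n) * t + θ * ((n : ℝ) - (i : ℝ)) + 1)))

noncomputable def jumpRateDrift {κ : ℕ} (i : Fin (κ + 1)) (θ : ℝ) (y : Fin (κ + 1) → ℝ)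
    (z : Fin κ → ℝ) : ℝ :=
  (∑ m ∈ Finset.univ.filter (fun m : Fin κ => (m : ℕ) < (i : ℕ)),
      ((θ - 1) / (y m.castSucc - y i) + (1 - θ) / (z m - y i))) +
    ∑ n ∈ Finset.univ.filter (fun n : Fin κ => (i : ℕ) ≤ (n : ℕ)),
      ((1 - θ) / (y i - y n.succ) + (θ - 1) / (y i - z n))

theorem hasFirstOrderExpansion_jumpRateProduct {κ : ℕ} (i : Fin (κ + 1)) (θ : ℝ) {δ : ℝ}
    (hδ : 0 < δ) {t : α → ℝ} (ht : Tendsto t l atTop) {y : α → Fin (κ + 1) → ℝ}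
    {z : α → Fin κ → ℝ} (hyy : ∀ᶠ p in l, ∀ m m', m ≠ m' → δ ≤ |y p m - y p m'|)
    (hyz : ∀ᶠ p in l, ∀ m m', δ ≤ |y p m - z p m'|) :
    HasFirstOrderExpansion l (fun p => (t p)⁻¹) (fun p => jumpRateProduct i θ (t p) (y p) (z p))
      (fun p => jumpRateDrift i θ (y p) (z p)) := by
  have hu := ht.inv_tendsto_atTop
  unfold jumpRateProduct jumpRateDrift
  refine (HasFirstOrderExpansion.prod hu fun m hm => ?_).mul hu
    (HasFirstOrderExpansion.prod hu fun n hn => ?_)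
  · have hmi : m.castSucc ≠ i := by
      simp only [Finset.mem_filter] at hm
      exact Fin.ne_of_lt hm.2
    refine ((hasFirstOrderExpansion_ratio (θ * ((i : ℝ) - m + 1) - 1) (θ * ((i : ℝ) - m)) hδ ht
      (hyy.mono fun p hp => hp _ _ hmi)).mul hu
      (hasFirstOrderExpansion_ratio (θ * ((i : ℝ) - 1 - m)) (θ * ((i : ℝ) - m) - 1) hδ ht
        (hyz.mono fun p hp => by rw [abs_sub_comm]; exact hp i m))).congr
      (fun p => by ring) (fun p => by ring)
  · have hin : i ≠ n.succ := by
      simp only [Finset.mem_filter] at hn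
      exact Fin.ne_of_lt (Nat.lt_succ_of_le hn.2)
    refine ((hasFirstOrderExpansion_ratio (θ * ((n : ℝ) - i) + 1) (θ * ((n : ℝ) - i + 1)) hδ ht
      (hyy.mono fun p hp => hp _ _ hin)).mul hu
      (hasFirstOrderExpansion_ratio (θ * ((n : ℝ) - i + 1)) (θ * ((n : ℝ) - i) + 1) hδ ht
        (hyz.mono fun p hp => hp i n))).congr
      (fun p => by ring) (fun p => by ring)

theorem rpow_neg_one_half_sq_s7 {x : ℝ} (hx : 0 ≤ x) : (x ^ (-(1 : ℝ) / 2)) ^ 2 = x⁻¹ := by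
  rw [← Real.rpow_natCast, ← Real.rpow_mul hx]
  norm_num [Real.rpow_neg_one]

def separatedConfigs (κ : ℕ) (δ : ℝ) : Set ((Fin (κ + 1) → ℝ) × (Fin κ → ℝ)) :=
  {q | (∀ m m', m ≠ m' → δ ≤ |q.1 m - q.1 m'|) ∧ ∀ m m', δ ≤ |q.1 m - q.2 m'|}

theorem isBigO_jumpRate {κ : ℕ} (i : Fin (κ + 1)) (θ : ℝ) {δ : ℝ} (hδ : 0 < δ) :
    (fun p : ℝ × _ => p.1⁻¹ * jumpRateProduct i θ (p.1 ^ (-(1 : ℝ) / 2)) p.2.1 p.2.2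
      - p.1⁻¹ - p.1 ^ (-(1 : ℝ) / 2) * jumpRateDrift i θ p.2.1 p.2.2)
      =O[𝓝[>] 0 ×ˢ 𝓟 (separatedConfigs κ δ)] fun _ => (1 : ℝ) := by
  set l := 𝓝[>] (0 : ℝ) ×ˢ 𝓟 (separatedConfigs κ δ)
  have hS : ∀ᶠ p in l, p.2 ∈ separatedConfigs κ δ := tendsto_snd (eventually_mem_principal _)
  have hε : ∀ᶠ p in l, 0 < p.1 := tendsto_fst (self_mem_nhdsWithin (s := Set.Ioi 0))
  have ht : Tendsto (fun p : ℝ × _ => p.1 ^ (-(1 : ℝ) / 2)) l atTop :=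
    (tendsto_rpow_neg_nhdsGT_zero (by norm_num)).comp tendsto_fst
  have hrate := (hasFirstOrderExpansion_jumpRateProduct i θ hδ ht (hS.mono fun _ hp => hp.1)
    (hS.mono fun _ hp => hp.2)).sq_mul_sub_isBigO_one
    ((ht.eventually_gt_atTop 0).mono fun _ hp => hp.ne')
  exact hrate.congr' (hε.mono fun p hp => by simp only [rpow_neg_one_half_sq_s7 hp.le])
    EventuallyEq.rfl

theorem multilevel_rate_expansion_general (κ : ℕ) (i : Fin (κ + 1))
    (θ δ : ℝ) (hδ : 0 < δ) :
    ∃ C > 0, ∃ ε₀ > 0, ∀ ε : ℝ, 0 < ε → ε < ε₀ →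
      ∀ (y : Fin (κ + 1) → ℝ) (z : Fin κ → ℝ),
        StrictAnti y → StrictAnti z →
        (∀ m : Fin κ, z m < y m.castSucc ∧ y m.succ < z m) →
        (∀ m m' : Fin (κ + 1), m ≠ m' → δ ≤ |y m - y m'|) →
        (∀ m m' : Fin κ, m ≠ m' → δ ≤ |z m - z m'|) →
        (∀ (m : Fin (κ + 1)) (m' : Fin κ), δ ≤ |y m - z m'|) →
        |ε⁻¹ *
            (∏ m ∈ Finset.univ.filter (fun m : Fin κ => (m : ℕ) < (i : ℕ)),
              (((y m.castSucc - y i) * ε ^ (-(1 : ℝ) / 2) - 1 + θ * ((i : ℝ) - (m : ℝ) + 1)) /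
                  ((y m.castSucc - y i) * ε ^ (-(1 : ℝ) / 2) + θ * ((i : ℝ) - (m : ℝ)))) *
                (((z m - y i) * ε ^ (-(1 : ℝ) / 2) + θ * ((i : ℝ) - 1 - (m : ℝ))) /
                  ((z m - y i) * ε ^ (-(1 : ℝ) / 2) - 1 + θ * ((i : ℝ) - (m : ℝ))))) *
            (∏ n ∈ Finset.univ.filter (fun n : Fin κ => (i : ℕ) ≤ (n : ℕ)),
              (((y i - y n.succ) * ε ^ (-(1 : ℝ) / 2) + θ * ((n : ℝ) - (i : ℝ)) + 1) /
                  ((y i - y n.succ) * ε ^ (-(1 : ℝ) / 2) + θ * ((n : ℝ) - (i : ℝ) + 1))) *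
                (((y i - z n) * ε ^ (-(1 : ℝ) / 2) + θ * ((n : ℝ) - (i : ℝ) + 1)) /
                  ((y i - z n) * ε ^ (-(1 : ℝ) / 2) + θ * ((n : ℝ) - (i : ℝ)) + 1))) -
          ε⁻¹ -
          ε ^ (-(1 : ℝ) / 2) *
            ((∑ m ∈ Finset.univ.filter (fun m : Fin κ => (m : ℕ) < (i : ℕ)),
                ((θ - 1) / (y m.castSucc - y i) + (1 - θ) / (z m - y i))) +
              ∑ n ∈ Finset.univ.filter (fun n : Fin κ => (i : ℕ) ≤ (n : ℕ)),
                ((1 - θ) / (y i - y n.succ) + (θ - 1) / (y i - z n)))| ≤ C := by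
  obtain ⟨C, hC, ε₀, hε₀, hbound⟩ :=
    exists_bound_of_isBigO_nhdsGT_prod_principal (isBigO_jumpRate i θ hδ)
  refine ⟨C, hC, ε₀, hε₀, fun ε hε hεε₀ y z _ _ _ hyy _ hyz => ?_⟩
  rw [mul_assoc]
  exact hbound ε hε hεε₀ (y, z) ⟨hyy, hyz⟩

/-- **Asymptotic expansion of the multilevel jump rates.** Here the upper level `k = κ+1`
has particles `y : Fin (κ+1) → ℝ` (in decreasing order) and the lower level `k−1 = κ` has
particles `z : Fin κ → ℝ`, interlacing as `y_m > z_m > y_{m+1}`; the (0-based) index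
`i : Fin (κ+1)` corresponds to the paper's `i+1 ∈ {1,…,k}`, and `k ≤ N`.
The multilevel jump rate `Q_ε` satisfies
`Q_ε = ε⁻¹ + ε^{−1/2}(Σ_{m<i} [(θ−1)/(y_m−y_i) + (1−θ)/(z_m−y_i)]
  + Σ_{n≥i} [(1−θ)/(y_i−y_{n+1}) + (θ−1)/(y_i−z_n)]) + O(1)`,
uniformly over configurations whose pairwise distances are at least `δ`. -/
theorem multilevel_rate_expansion (κ N : ℕ) (hκN : κ + 1 ≤ N) (i : Fin (κ + 1))
    (θ δ : ℝ) (hθ : 0 < θ) (hδ : 0 < δ) :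
    ∃ C > 0, ∃ ε₀ > 0, ∀ ε : ℝ, 0 < ε → ε < ε₀ →
      ∀ (y : Fin (κ + 1) → ℝ) (z : Fin κ → ℝ),
        StrictAnti y → StrictAnti z →
        (∀ m : Fin κ, z m < y m.castSucc ∧ y m.succ < z m) →
        (∀ m m' : Fin (κ + 1), m ≠ m' → δ ≤ |y m - y m'|) →
        (∀ m m' : Fin κ, m ≠ m' → δ ≤ |z m - z m'|) →
        (∀ (m : Fin (κ + 1)) (m' : Fin κ), δ ≤ |y m - z m'|) →
        |ε⁻¹ *
            (∏ m ∈ Finset.univ.filter (fun m : Fin κ => (m : ℕ) < (i : ℕ)),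
              (((y m.castSucc - y i) * ε ^ (-(1 : ℝ) / 2) - 1 + θ * ((i : ℝ) - (m : ℝ) + 1)) /
                  ((y m.castSucc - y i) * ε ^ (-(1 : ℝ) / 2) + θ * ((i : ℝ) - (m : ℝ)))) *
                (((z m - y i) * ε ^ (-(1 : ℝ) / 2) + θ * ((i : ℝ) - 1 - (m : ℝ))) /
                  ((z m - y i) * ε ^ (-(1 : ℝ) / 2) - 1 + θ * ((i : ℝ) - (m : ℝ))))) *
            (∏ n ∈ Finset.univ.filter (fun n : Fin κ => (i : ℕ) ≤ (n : ℕ)),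
              (((y i - y n.succ) * ε ^ (-(1 : ℝ) / 2) + θ * ((n : ℝ) - (i : ℝ)) + 1) /
                  ((y i - y n.succ) * ε ^ (-(1 : ℝ) / 2) + θ * ((n : ℝ) - (i : ℝ) + 1))) *
                (((y i - z n) * ε ^ (-(1 : ℝ) / 2) + θ * ((n : ℝ) - (i : ℝ) + 1)) /
                  ((y i - z n) * ε ^ (-(1 : ℝ) / 2) + θ * ((n : ℝ) - (i : ℝ)) + 1))) -
          ε⁻¹ -
          ε ^ (-(1 : ℝ) / 2) *
            ((∑ m ∈ Finset.univ.filter (fun m : Fin κ => (m : ℕ) < (i : ℕ)),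
                ((θ - 1) / (y m.castSucc - y i) + (1 - θ) / (z m - y i))) +
              ∑ n ∈ Finset.univ.filter (fun n : Fin κ => (i : ℕ) ≤ (n : ℕ)),
                ((1 - θ) / (y i - y n.succ) + (θ - 1) / (y i - z n)))| ≤ C :=
  multilevel_rate_expansion_general κ i θ δ hδ
end

section
/- Stirling-type limit used in the fixed-time convergence: Fix reals t > 0, c ≥ 0 and y ∈ ℝ. Let (ε_n) be a sequence of positive reals with ε_n → 0 and let (m_n) be a sequence of natural numbers such that ε_n^{1/2}(m_n − t/ε_n) → y. Then lim_{n→∞} ε_n^{−1/2−c} · e^{−t/ε_n} · (t/ε_n)^{m_n} / Γ(c + m_n + 1) = t^{−1/2−c} · (2π)^{−1/2} · exp(−y²/(2t)). -/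
/-!
Put `L = t / ε`. Then `ε^{-1/2-c} e^{-L} L^m / Γ(c+m+1)` is `t^{-1/2-c} (2π)^{-1/2}` times
`√(2πL) e^{-L} L^m / m!`, `(L/m)^c` and `m^c m! / Γ(c+m+1)`. The last two tend to `1` (the
hypothesis forces `m/L → 1`, and Euler's limit formula for `Γ`). The first is the local limit of
the Poisson distribution: by Stirling it is asymptotic to `exp (m - L - m log (m/L))`, and with
`m = L(1+u)` the exponent is `-L u²/2 + O(L u³) → -a²/2`, where `a = y/√t` is the limit of
`(m - L)/√L`.
-/

open Filter Real Topology Asymptotics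
open scoped Nat

lemma abs_log_one_add_sub_le {u : ℝ} (hu : |u| ≤ 1 / 2) :
    |log (1 + u) - (u - u ^ 2 / 2)| ≤ 2 * |u| ^ 3 := by
  have h : |-u + u ^ 2 / 2 + log (1 + u)| ≤ |u| ^ 3 / (1 - |u|) := by
    simpa [Finset.sum_range_succ, one_add_one_eq_two] using
      abs_log_sub_add_sum_range_le (x := -u) (by rw [abs_neg]; linarith) 2
  calc |log (1 + u) - (u - u ^ 2 / 2)| = |-u + u ^ 2 / 2 + log (1 + u)| := by ring_nf
    _ ≤ |u| ^ 3 / (1 - |u|) := h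
    _ ≤ 2 * |u| ^ 3 := by
        rw [div_le_iff₀ (by linarith)]
        nlinarith [mul_le_mul_of_nonneg_left hu (pow_nonneg (abs_nonneg u) 3)]

lemma abs_sub_one_add_mul_log_one_add_add_sq_div_two_le {u : ℝ} (hu : |u| ≤ 1 / 2) :
    |u - (1 + u) * log (1 + u) + u ^ 2 / 2| ≤ 4 * |u| ^ 3 := by
  set r := log (1 + u) - (u - u ^ 2 / 2)
  have hr : |r| ≤ 2 * |u| ^ 3 := abs_log_one_add_sub_le hu
  have h1u : |1 + u| ≤ 3 / 2 := (abs_add_le 1 u).trans (by norm_num; linarith)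
  calc |u - (1 + u) * log (1 + u) + u ^ 2 / 2| = |u ^ 3 / 2 - (1 + u) * r| := by
        congr 1; simp only [r]; ring
    _ ≤ |u| ^ 3 / 2 + |1 + u| * |r| := by
        refine (abs_sub _ _).trans ?_
        rw [abs_div, abs_pow, abs_mul, abs_two]
    _ ≤ |u| ^ 3 / 2 + 3 / 2 * (2 * |u| ^ 3) := by gcongr
    _ ≤ 4 * |u| ^ 3 := by nlinarith [pow_nonneg (abs_nonneg u) 3]

lemma sqrt_two_pi_mul_exp_neg_mul_pow_div_factorial_eq {L : ℝ} (hL : 0 < L) {m : ℕ}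
    (hm : m ≠ 0) :
    √(2 * π * L) * exp (-L) * L ^ m / m ! =
      √(2 * m * π) * (m / exp 1) ^ m / m ! * √(L / m) * exp (m - L - m * log (m / L)) := by
  have hm0 : (0 : ℝ) < m := by positivity
  have hsqrt_m : √(2 * m * π) = √(2 * π * L) * √(m / L) := by
    rw [← sqrt_mul (by positivity)]
    congr 1
    field_simp
  have hexp : exp (m - L - m * log (m / L)) = exp m * exp (-L) / (m / L) ^ m := by
    rw [sub_eq_add_neg (m - L : ℝ), exp_add, exp_sub, exp_neg, exp_neg, exp_nat_mul,
      exp_log (by positivity)]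
    ring
  rw [hexp, hsqrt_m, ← exp_one_pow, div_pow, div_pow, sqrt_div hL.le, sqrt_div hm0.le]
  field_simp

section PoissonLocalLimit

variable {ι : Type*} {l : Filter ι} {x L : ι → ℝ} {a : ℝ}

lemma tendsto_sub_div_of_tendsto_sub_div_sqrt (hL : Tendsto L l atTop)
    (hx : Tendsto (fun i => (x i - L i) / √(L i)) l (𝓝 a)) :
    Tendsto (fun i => (x i - L i) / L i) l (𝓝 0) := by
  have h := hx.mul (tendsto_inv_atTop_zero.comp (tendsto_sqrt_atTop.comp hL))
  rw [mul_zero] at h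
  refine h.congr' ?_
  filter_upwards [hL.eventually_ge_atTop 0] with i hi
  simp only [Function.comp_apply]
  rw [← div_eq_mul_inv, div_div, mul_self_sqrt hi]

lemma tendsto_div_of_tendsto_sub_div_sqrt (hL : Tendsto L l atTop)
    (hx : Tendsto (fun i => (x i - L i) / √(L i)) l (𝓝 a)) :
    Tendsto (fun i => x i / L i) l (𝓝 1) := by
  have h := (tendsto_sub_div_of_tendsto_sub_div_sqrt hL hx).const_add 1
  rw [add_zero] at h
  refine h.congr' ?_
  filter_upwards [hL.eventually_gt_atTop 0] with i hi
  field_simp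
  ring

lemma tendsto_atTop_of_tendsto_sub_div_sqrt (hL : Tendsto L l atTop)
    (hx : Tendsto (fun i => (x i - L i) / √(L i)) l (𝓝 a)) :
    Tendsto x l atTop := by
  refine ((tendsto_div_of_tendsto_sub_div_sqrt hL hx).pos_mul_atTop one_pos hL).congr' ?_
  filter_upwards [hL.eventually_gt_atTop 0] with i hi
  exact div_mul_cancel₀ _ hi.ne'

lemma tendsto_sub_sub_mul_log_div (hL : Tendsto L l atTop)
    (hx : Tendsto (fun i => (x i - L i) / √(L i)) l (𝓝 a)) :
    Tendsto (fun i => x i - L i - x i * log (x i / L i)) l (𝓝 (-(a ^ 2) / 2)) := by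
  set u := fun i => (x i - L i) / L i
  set δ := fun i => (x i - L i) / √(L i)
  have hu : Tendsto u l (𝓝 0) := tendsto_sub_div_of_tendsto_sub_div_sqrt hL hx
  have hua : Tendsto (fun i => |u i|) l (𝓝 0) := by simpa using hu.abs
  have hδ2 : Tendsto (fun i => δ i ^ 2 / 2) l (𝓝 (a ^ 2 / 2)) := (hx.pow 2).div_const 2
  have hbound : Tendsto (fun i => 4 * δ i ^ 2 * |u i|) l (𝓝 0) := by
    simpa using ((hx.pow 2).const_mul 4).mul hua
  have hrem :
      Tendsto (fun i => x i - L i - x i * log (x i / L i) + δ i ^ 2 / 2) l (𝓝 0) := by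
    refine squeeze_zero_norm' ?_ hbound
    filter_upwards [hL.eventually_gt_atTop 0,
      hua.eventually_le_const (by norm_num : (0 : ℝ) < 1 / 2)] with i hLi hui
    have hδu : δ i ^ 2 = L i * u i ^ 2 := by
      simp only [δ, u, div_pow, sq_sqrt hLi.le]
      field_simp
    have hx1 : x i / L i = 1 + u i := by simp only [u]; field_simp; ring
    have hxL : x i = L i * (1 + u i) := by rw [← hx1]; field_simp
    have hE : x i - L i - x i * log (x i / L i) + δ i ^ 2 / 2 =
        L i * (u i - (1 + u i) * log (1 + u i) + u i ^ 2 / 2) := by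
      rw [hx1, hδu, hxL]
      ring
    calc ‖x i - L i - x i * log (x i / L i) + δ i ^ 2 / 2‖
        = L i * |u i - (1 + u i) * log (1 + u i) + u i ^ 2 / 2| := by
          rw [hE, norm_mul, Real.norm_eq_abs, Real.norm_eq_abs, abs_of_pos hLi]
      _ ≤ L i * (4 * |u i| ^ 3) := by
          gcongr
          exact abs_sub_one_add_mul_log_one_add_add_sq_div_two_le hui
      _ = 4 * δ i ^ 2 * |u i| := by rw [hδu, ← sq_abs (u i)]; ring
  simpa [neg_div] using hrem.sub hδ2

lemma tendsto_sqrt_two_pi_mul_exp_neg_mul_pow_div_factorial {m : ι → ℕ}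
    (hL : Tendsto L l atTop)
    (hm : Tendsto (fun i => ((m i : ℝ) - L i) / √(L i)) l (𝓝 a)) :
    Tendsto (fun i => √(2 * π * L i) * exp (-L i) * L i ^ m i / (m i)!) l
      (𝓝 (exp (-(a ^ 2) / 2))) := by
  have hm_top : Tendsto m l atTop :=
    tendsto_natCast_atTop_iff.mp (tendsto_atTop_of_tendsto_sub_div_sqrt hL hm)
  have hstirling :
      Tendsto (fun n : ℕ => √(2 * n * π) * (n / exp 1) ^ n / n !) atTop (𝓝 1) :=
    (isEquivalent_iff_tendsto_one (.of_forall fun n => by positivity)).mp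
      Stirling.factorial_isEquivalent_stirling.symm
  have hsqrt : Tendsto (fun i => √(L i / m i)) l (𝓝 1) := by
    simpa using ((tendsto_div_of_tendsto_sub_div_sqrt hL hm).inv₀ one_ne_zero).sqrt
  have h := ((hstirling.comp hm_top).mul hsqrt).mul
    ((continuous_exp.tendsto _).comp (tendsto_sub_sub_mul_log_div hL hm))
  rw [one_mul, one_mul] at h
  refine h.congr' ?_
  filter_upwards [hL.eventually_gt_atTop 0, hm_top.eventually_ne_atTop 0] with i hLi hmi
  exact (sqrt_two_pi_mul_exp_neg_mul_pow_div_factorial_eq hLi hmi).symm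

end PoissonLocalLimit

lemma Real.Gamma_mul_prod_range_add {s : ℝ} (hs : ∀ k : ℕ, s ≠ -k) (n : ℕ) :
    Gamma s * ∏ j ∈ Finset.range n, (s + j) = Gamma (s + n) := by
  induction n with
  | zero => simp
  | succ n ih =>
    have hsn : s + n ≠ 0 := fun h => hs n (eq_neg_of_add_eq_zero_left h)
    rw [Finset.prod_range_succ, ← mul_assoc, ih, Nat.cast_succ, ← add_assoc,
      Gamma_add_one hsn, mul_comm]

lemma tendsto_rpow_mul_factorial_div_Gamma {c : ℝ} (hc : ∀ k : ℕ, c + 1 ≠ -k) :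
    Tendsto (fun n : ℕ => (n : ℝ) ^ c * n ! / Gamma (c + n + 1)) atTop (𝓝 1) := by
  have hΓ : Gamma (c + 1) ≠ 0 := Gamma_ne_zero hc
  have hseq := (GammaSeq_tendsto_Gamma (c + 1)).div_const (Gamma (c + 1))
  rw [div_self hΓ] at hseq
  have hquot : Tendsto (fun n : ℕ => (c + 1) * (n : ℝ)⁻¹ + 1) atTop (𝓝 1) := by
    simpa using (tendsto_inv_atTop_zero.comp tendsto_natCast_atTop_atTop).const_mul (c + 1)
      |>.add_const 1
  have h := hseq.mul hquot
  rw [one_mul] at h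
  refine h.congr' ?_
  filter_upwards [eventually_ne_atTop 0] with n hn
  have hn0 : (0 : ℝ) < n := by positivity
  have hcn : c + n + 1 ≠ 0 := fun h => hc n (by linarith)
  have hΓn : Gamma (c + n + 1) ≠ 0 :=
    Gamma_ne_zero fun k h => hc (k + n) (by push_cast; linarith)
  have hprod : Gamma (c + 1) * ∏ j ∈ Finset.range (n + 1), (c + 1 + j) =
      (c + n + 1) * Gamma (c + n + 1) := by
    rw [Gamma_mul_prod_range_add hc, ← Gamma_add_one hcn]
    push_cast
    ring_nf
  rw [GammaSeq, rpow_add_one hn0.ne', div_div, mul_comm _ (Gamma (c + 1)), hprod]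
  field_simp
  ring

lemma rpow_mul_exp_neg_mul_pow_div_Gamma_eq {t ε c : ℝ} (ht : 0 < t) (hε : 0 < ε) {m : ℕ}
    (hm : m ≠ 0) :
    ε ^ (-(1 : ℝ) / 2 - c) * exp (-(t / ε)) * (t / ε) ^ m / Gamma (c + m + 1) =
      t ^ (-(1 : ℝ) / 2 - c) * (2 * π) ^ (-(1 : ℝ) / 2) *
        (√(2 * π * (t / ε)) * exp (-(t / ε)) * (t / ε) ^ m / m ! * ((t / ε) / m) ^ c *
          ((m : ℝ) ^ c * m ! / Gamma (c + m + 1))) := by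
  have hm0 : (0 : ℝ) < m := by positivity
  have hL : 0 < t / ε := div_pos ht hε
  have hε_eq : ε = t / (t / ε) := by field_simp
  have hscale :
      ε ^ (-(1 : ℝ) / 2 - c) = t ^ (-(1 : ℝ) / 2 - c) * (√(t / ε) * (t / ε) ^ c) := by
    conv_lhs => rw [hε_eq]
    rw [div_rpow ht.le hL.le, sqrt_eq_rpow, ← rpow_add hL, div_eq_mul_inv, ← rpow_neg hL.le]
    ring_nf
  have h2π : (2 * π) ^ (-(1 : ℝ) / 2) = (√(2 * π))⁻¹ := by
    rw [sqrt_eq_rpow, ← rpow_neg (by positivity)]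
    ring_nf
  rw [hscale, h2π, div_rpow hL.le hm0.le, sqrt_mul (by positivity : (0 : ℝ) ≤ 2 * π)]
  have h2π_pos : 0 < √(2 * π) := by positivity
  have hmc_pos : 0 < (m : ℝ) ^ c := by positivity
  field_simp

/-- **Stirling-type limit used in the fixed-time convergence.** If `ε_n → 0⁺` and
`ε_n^{1/2}(m_n − t/ε_n) → y`, then
`ε_n^{−1/2−c} e^{−t/ε_n} (t/ε_n)^{m_n} / Γ(c + m_n + 1) → t^{−1/2−c} (2π)^{−1/2} e^{−y²/(2t)}`. -/
theorem stirling_type_limit (t c y : ℝ) (ht : 0 < t) (hc : 0 ≤ c)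
    (ε : ℕ → ℝ) (hεpos : ∀ n, 0 < ε n) (hε0 : Tendsto ε atTop (nhds 0))
    (m : ℕ → ℕ)
    (hm : Tendsto (fun n => (ε n) ^ ((1 : ℝ) / 2) * ((m n : ℝ) - t / ε n)) atTop (nhds y)) :
    Tendsto (fun n =>
        (ε n) ^ (-(1 : ℝ) / 2 - c) * Real.exp (-(t / ε n)) * (t / ε n) ^ (m n) /
          Real.Gamma (c + (m n : ℝ) + 1))
      atTop
      (nhds (t ^ (-(1 : ℝ) / 2 - c) * (2 * Real.pi) ^ (-(1 : ℝ) / 2) *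
        Real.exp (-(y ^ 2) / (2 * t)))) := by
  set L : ℕ → ℝ := fun n => t / ε n
  have hε0' : Tendsto ε atTop (𝓝[>] 0) :=
    tendsto_nhdsWithin_iff.mpr ⟨hε0, .of_forall hεpos⟩
  have hL : Tendsto L atTop atTop := (tendsto_inv_nhdsGT_zero.comp hε0').const_mul_atTop ht
  have hδ : Tendsto (fun n => ((m n : ℝ) - L n) / √(L n)) atTop (𝓝 (y / √t)) := by
    refine (hm.div_const √t).congr fun n => ?_
    have hεn := hεpos n
    simp only [L]
    rw [sqrt_div ht.le, ← sqrt_eq_rpow]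
    field_simp
  have hm_top : Tendsto m atTop atTop :=
    tendsto_natCast_atTop_iff.mp (tendsto_atTop_of_tendsto_sub_div_sqrt hL hδ)
  have hLm : Tendsto (fun n => L n / m n) atTop (𝓝 1) := by
    simpa using (tendsto_div_of_tendsto_sub_div_sqrt hL hδ).inv₀ one_ne_zero
  have hpow : Tendsto (fun n => (L n / m n) ^ c) atTop (𝓝 1) := by
    simpa using hLm.rpow_const (p := c) (Or.inl one_ne_zero)
  have hΓ := (tendsto_rpow_mul_factorial_div_Gamma fun k h => by
    linarith [k.cast_nonneg (α := ℝ)]).comp hm_top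
  have h := (((tendsto_sqrt_two_pi_mul_exp_neg_mul_pow_div_factorial hL hδ).mul hpow).mul
    hΓ).const_mul (t ^ (-(1 : ℝ) / 2 - c) * (2 * π) ^ (-(1 : ℝ) / 2))
  rw [show -(y / √t) ^ 2 / 2 = -(y ^ 2) / (2 * t) by rw [div_pow, sq_sqrt ht.le]; ring,
    mul_one, mul_one] at h
  refine h.congr' ?_
  filter_upwards [hm_top.eventually_ne_atTop 0] with n hn
  exact (rpow_mul_exp_neg_mul_pow_div_Gamma_eq ht (hεpos n) hn).symm
end

section
/- Asymptotics of the Jack branching coefficients: Fix a real θ > 0, an integer k ≥ 2, a real c > 0, and reals ŷ^k_1 > ŷ^{k−1}_1 > ŷ^k_2 > ŷ^{k−1}_2 > ⋯ > ŷ^{k−1}_{k−1} > ŷ^k_k (a strictly interlacing pair of configurations). Set f(α) := Γ(α+1)/Γ(α+θ) for α ≥ 0. Let (ε_n) be positive reals with ε_n → 0, and let ν(n) = (ν_1(n) ≥ ⋯ ≥ ν_k(n)) and μ(n) = (μ_1(n) ≥ ⋯ ≥ μ_{k−1}(n)) be sequences of partitions with μ(n) interlacing ν(n) (that is, ν_i(n)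 ≥ μ_i(n) ≥ ν_{i+1}(n)) such that ε_n^{1/2}(ν_i(n) − c/ε_n) → ŷ^k_i for i = 1, …, k and ε_n^{1/2}(μ_i(n) − c/ε_n) → ŷ^{k−1}_i for i = 1, …, k−1. Then lim_{n→∞} ε_n^{−(k−1)(1−θ)/2} · ∏_{1≤i≤j≤k−1} [ f(μ_i(n) − μ_j(n) + θ(j−i)) · f(ν_i(n) − ν_{j+1}(n) + θ(j−i)) ] / [ f(μ_i(n) − ν_{j+1}(n) + θ(j−i)) · f(ν_i(n) − μ_j(n) + θ(j−i)) ] = Γ(θ)^{1−k} · ∏_{1≤i<j≤k−1} (ŷ^{k−1}_i − ŷ^{k−1}_j)^{1−θ} · ∏_{1≤i<j≤k} (ŷ^k_i − ŷ^k_j)^{1−θ} · ∏_{i=1}^{k−1} ∏_{j=1}^k |ŷ^{k−1}_i − ŷ^k_j|^{θ−1}. -/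
open Filter Real

/-- `f(α) = Γ(α+1)/Γ(α+θ)`, the building block of the Jack branching coefficients. -/
noncomputable def branchF (θ α : ℝ) : ℝ := Real.Gamma (α + 1) / Real.Gamma (α + θ)

/-!
Wendel's limit `Γ(x + θ) ~ x^θ Γ(x)` (log-convexity of `Γ` for `θ ≤ 1`, then `Γ(x + 1) = x Γ(x)`)
gives `f(x) ~ x^{1-θ}` as `x → ∞`. Each argument of `f` is a difference of two rows plus a constant,
i.e. `ε_n^{-1/2}` times (the difference of the two limit points `+ o(1)`), so `ε_n^{(1-θ)/2} f(·)`
tends to the `(1-θ)`-th power of that difference. Numerator and denominator have equally many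
factors, so these rescalings cancel, except on the `k - 1` diagonal factors
`f(μ_j - μ_j) = f(0) = Γ(θ)⁻¹`, which stay constant: the prefactor `ε_n^{-(k-1)(1-θ)/2}` pays for
them. Regrouping the limits according to the interlacing order gives the stated products.
-/

open Asymptotics Topology Finset

theorem isEquivalent_add_const_atTop (c : ℝ) : (fun x : ℝ => x + c) ~[atTop] id :=
  IsEquivalent.refl.add_const_of_norm_tendsto_atTop tendsto_norm_atTop_atTop

namespace Real

theorem Gamma_add_le_rpow_mul_Gamma {x t : ℝ} (hx : 0 < x) (ht₀ : 0 ≤ t) (ht₁ : t ≤ 1) :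
    Gamma (x + t) ≤ x ^ t * Gamma x := by
  have hΓ : 0 < Gamma x := Gamma_pos_of_pos hx
  have hconv := convexOn_log_Gamma.2 (Set.mem_Ioi.2 hx) (Set.mem_Ioi.2 (by linarith : 0 < x + 1))
    (sub_nonneg.2 ht₁) ht₀ (by ring)
  simp only [smul_eq_mul, Function.comp_apply, Gamma_add_one hx.ne',
    log_mul hx.ne' hΓ.ne'] at hconv
  rw [show (1 - t) * x + t * (x + 1) = x + t by ring] at hconv
  calc Gamma (x + t) = exp (log (Gamma (x + t))) :=
        (exp_log (Gamma_pos_of_pos (by linarith))).symm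
    _ ≤ exp (t * log x + log (Gamma x)) := exp_le_exp.2 (by linarith)
    _ = x ^ t * Gamma x := by rw [exp_add, exp_log hΓ, rpow_def_of_pos hx, mul_comm t]

/-- Wendel's limit, obtained by squeezing between his two inequalities. -/
theorem tendsto_Gamma_add_div_rpow_mul_Gamma {θ : ℝ} (h₀ : 0 ≤ θ) (h₁ : θ ≤ 1) :
    Tendsto (fun x => Gamma (x + θ) / (x ^ θ * Gamma x)) atTop (𝓝 1) := by
  have hratio : Tendsto (fun x : ℝ => x / (x + θ)) atTop (𝓝 1) :=
    (isEquivalent_iff_tendsto_one ((eventually_gt_atTop (-θ)).mono fun x hx => by linarith)).1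
      (isEquivalent_add_const_atTop θ).symm
  have hlow : Tendsto (fun x : ℝ => (x / (x + θ)) ^ (1 - θ)) atTop (𝓝 1) := by
    simpa using hratio.rpow_const (Or.inl one_ne_zero)
  refine tendsto_of_tendsto_of_tendsto_of_le_of_le' hlow tendsto_const_nhds ?_ ?_
  · filter_upwards [eventually_gt_atTop 0] with x hx
    have key := Gamma_add_le_rpow_mul_Gamma (x := x + θ) (t := 1 - θ) (by linarith)
      (by linarith) (by linarith)
    rw [show x + θ + (1 - θ) = x + 1 by ring, Gamma_add_one hx.ne'] at key
    rw [div_rpow hx.le (by linarith), div_le_div_iff₀ (by positivity)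
      (mul_pos (rpow_pos_of_pos hx _) (Gamma_pos_of_pos hx))]
    calc x ^ (1 - θ) * (x ^ θ * Gamma x) = x * Gamma x := by
          rw [← mul_assoc, ← rpow_add hx]; simp
      _ ≤ _ := key
      _ = _ := mul_comm _ _
  · filter_upwards [eventually_gt_atTop 0] with x hx
    exact div_le_one_of_le₀ (Gamma_add_le_rpow_mul_Gamma hx h₀ h₁)
      (mul_pos (rpow_pos_of_pos hx _) (Gamma_pos_of_pos hx)).le

theorem isEquivalent_Gamma_add {θ : ℝ} (hθ : 0 ≤ θ) :
    (fun x => Gamma (x + θ)) ~[atTop] fun x => x ^ θ * Gamma x := by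
  suffices h : ∀ n : ℕ, ∀ t ∈ Set.Icc (0 : ℝ) 1,
      (fun x => Gamma (x + (t + n))) ~[atTop] fun x => x ^ (t + n) * Gamma x by
    have := h ⌊θ⌋₊ (θ - ⌊θ⌋₊) ⟨sub_nonneg.2 (Nat.floor_le hθ),
      by linarith [Nat.lt_floor_add_one θ]⟩
    simpa using this
  intro n t ⟨ht₀, ht₁⟩
  induction n with
  | zero =>
    simp only [Nat.cast_zero, add_zero]
    refine (isEquivalent_iff_tendsto_one ?_).2 (tendsto_Gamma_add_div_rpow_mul_Gamma ht₀ ht₁)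
    filter_upwards [eventually_gt_atTop 0] with x hx
    exact (mul_pos (rpow_pos_of_pos hx _) (Gamma_pos_of_pos hx)).ne'
  | succ n ih =>
    refine (((isEquivalent_add_const_atTop (t + n)).mul ih).congr_left ?_).congr_right ?_
    all_goals filter_upwards [eventually_gt_atTop 0] with x hx
    · have := Gamma_add_one (s := x + (t + n)) (by positivity)
      simp only [Pi.mul_apply, Nat.cast_succ, ← add_assoc] at this ⊢
      rw [this]
    · simp only [Pi.mul_apply, id, Nat.cast_succ, ← add_assoc, rpow_add_one hx.ne']
      ring

end Real

theorem isEquivalent_branchF {θ : ℝ} (hθ : 0 ≤ θ) : branchF θ ~[atTop] fun x => x ^ (1 - θ) := by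
  refine ((IsEquivalent.refl (u := fun x => x * Gamma x)).div
    (isEquivalent_Gamma_add hθ) |>.congr_left ?_).congr_right ?_
  all_goals filter_upwards [eventually_gt_atTop 0] with x hx
  · simp [branchF, Gamma_add_one hx.ne']
  · have := (Gamma_pos_of_pos hx).ne'
    simp only [Pi.div_apply, rpow_sub hx, rpow_one]
    field_simp

theorem tendsto_rpow_mul_branchF {ι : Type*} {l : Filter ι} {θ L : ℝ} {s a : ι → ℝ}
    (hθ : 0 ≤ θ) (hL : 0 < L) (hs : Tendsto s l (𝓝[>] 0))
    (hsa : Tendsto (fun n => s n * a n) l (𝓝 L)) :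
    Tendsto (fun n => s n ^ (1 - θ) * branchF θ (a n)) l (𝓝 (L ^ (1 - θ))) := by
  have hspos : ∀ᶠ n in l, 0 < s n := hs.eventually eventually_mem_nhdsWithin
  have ha : Tendsto a l atTop := by
    refine (hsa.pos_mul_atTop hL (tendsto_inv_nhdsGT_zero.comp hs)).congr' ?_
    filter_upwards [hspos] with n hn
    simp only [Function.comp_apply]
    field_simp
  have hequiv : (fun n => s n ^ (1 - θ) * branchF θ (a n)) ~[l]
      fun n => (s n * a n) ^ (1 - θ) := by
    refine (IsEquivalent.refl.mul ((isEquivalent_branchF hθ).comp_tendsto ha)).congr_right ?_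
    filter_upwards [hspos, ha.eventually_gt_atTop 0] with n hsn han
    exact (mul_rpow hsn.le han.le).symm
  exact hequiv.symm.tendsto_nhds (hsa.rpow_const (Or.inl hL.ne'))

theorem tendsto_rpow_mul_branchF_sub {ι : Type*} {l : Filter ι} {θ x y t : ℝ}
    {s c a b : ι → ℝ} (hθ : 0 ≤ θ) (hxy : y < x) (hs : Tendsto s l (𝓝[>] 0))
    (ha : Tendsto (fun n => s n * (a n - c n)) l (𝓝 x))
    (hb : Tendsto (fun n => s n * (b n - c n)) l (𝓝 y)) :
    Tendsto (fun n => s n ^ (1 - θ) * branchF θ (a n - b n + t)) l (𝓝 ((x - y) ^ (1 - θ))) := by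
  refine tendsto_rpow_mul_branchF hθ (sub_pos.2 hxy) hs ?_
  have h := (ha.sub hb).add ((tendsto_nhds_of_tendsto_nhdsWithin hs).mul_const t)
  rw [zero_mul, add_zero] at h
  exact h.congr fun n => by ring

theorem branchF_zero (θ : ℝ) : branchF θ 0 = (Gamma θ)⁻¹ := by
  simp [branchF]

theorem mul_mul_div_mul_mul_cancel_left {K : Type*} [Field K] {q : K} (hq : q ≠ 0) (a b c d : K) :
    q * a * (q * b) / (q * c * (q * d)) = a * b / (c * d) := by
  rw [mul_mul_mul_comm, mul_mul_mul_comm q c, mul_div_mul_left _ _ (mul_ne_zero hq hq)]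

theorem mul_mul_div_mul_mul_eq_inv_mul {K : Type*} [Field K] {q : K} (hq : q ≠ 0) (a b c d : K) :
    a * (q * b) / (q * c * (q * d)) = q⁻¹ * (a * b / (c * d)) := by
  rw [← mul_mul_div_mul_mul_cancel_left hq a b c d, mul_assoc q a, mul_div_assoc q,
    inv_mul_cancel_left₀ hq]

theorem Finset.prod_prod_Iic_ite_eq {ι M : Type*} [Fintype ι] [LinearOrder ι]
    [LocallyFiniteOrderBot ι] [CommMonoid M] (a : M) (g : ι → ι → M) :
    ∏ j, ∏ i ∈ Iic j, (if i = j then a else g i j) =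
      a ^ Fintype.card ι * ∏ j, ∏ i ∈ Iio j, g i j := by
  have h (j : ι) : ∏ i ∈ Iic j, (if i = j then a else g i j) = a * ∏ i ∈ Iio j, g i j := by
    rw [← Iio_insert, prod_insert (by simp), if_pos rfl]
    exact congrArg _ (prod_congr rfl fun i hi => if_neg (mem_Iio.1 hi).ne)
  simp only [h, prod_mul_distrib, prod_const, card_univ]

theorem Fin.prod_univ_eq_prod_Iic_castSucc_mul_prod_Ici_succ {M : Type*} [CommMonoid M] {n : ℕ}
    (f : Fin (n + 1) → M) (m : Fin n) :
    ∏ j, f j = (∏ i ∈ Iic m, f i.castSucc) * ∏ i ∈ Ici m, f i.succ := by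
  rw [← Finset.prod_filter_mul_prod_filter_not univ (· ≤ m.castSucc), ← prod_Iic_castSucc,
    ← prod_Ici_succ]
  congr 2 <;> ext j <;> simp [Fin.le_def]

theorem Fin.prod_prod_Iio_eq_prod_prod_Iic {M : Type*} [CommMonoid M] {n : ℕ}
    (g : Fin (n + 1) → Fin (n + 1) → M) :
    ∏ j, ∏ i ∈ Iio j, g i j = ∏ j : Fin n, ∏ i ∈ Iic j, g i.castSucc j.succ := by
  rw [prod_univ_succ, show Iio (0 : Fin (n + 1)) = ∅ by ext; simp, prod_empty, one_mul]
  refine prod_congr rfl fun j _ => ?_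
  rw [← prod_Iic_castSucc (g · j.succ)]
  congr 1

section Interlacing

variable {κ : ℕ} {y : Fin (κ + 1) → ℝ} {z : Fin κ → ℝ}

theorem strictAnti_upper_of_interlace (hyz : ∀ m : Fin κ, z m < y m.castSucc ∧ y m.succ < z m) :
    StrictAnti y :=
  Fin.strictAnti_iff_succ_lt.2 fun m => (hyz m).2.trans (hyz m).1

theorem lt_castSucc_of_interlace (hyz : ∀ m : Fin κ, z m < y m.castSucc ∧ y m.succ < z m)
    {i j : Fin κ} (hij : i ≤ j) : z j < y i.castSucc :=
  (hyz j).1.trans_le <|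
    (strictAnti_upper_of_interlace hyz).antitone (Fin.castSucc_le_castSucc_iff.2 hij)

theorem succ_lt_of_interlace (hyz : ∀ m : Fin κ, z m < y m.castSucc ∧ y m.succ < z m)
    {i j : Fin κ} (hij : i ≤ j) : y j.succ < z i :=
  ((strictAnti_upper_of_interlace hyz).antitone (Fin.succ_le_succ_iff.2 hij)).trans_lt (hyz i).2

theorem strictAnti_lower_of_interlace (hyz : ∀ m : Fin κ, z m < y m.castSucc ∧ y m.succ < z m) :
    StrictAnti z := fun i _ hij =>
  (lt_castSucc_of_interlace hyz le_rfl).trans_le <|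
    ((strictAnti_upper_of_interlace hyz).antitone (Fin.succ_le_castSucc_iff.2 hij)).trans
      (hyz i).2.le

end Interlacing

section Branching

variable {κ : ℕ}

/-- The `(i, j)` factor of `J_{ν/μ}(1)`, with rows indexed from `0`. -/
noncomputable def branchingFactor (θ : ℝ) (μ : Fin κ → ℝ) (ν : Fin (κ + 1) → ℝ) (i j : Fin κ) : ℝ :=
  branchF θ (μ i - μ j + θ * ((j : ℝ) - (i : ℝ))) *
      branchF θ (ν i.castSucc - ν j.succ + θ * ((j : ℝ) - (i : ℝ))) /
    (branchF θ (μ i - ν j.succ + θ * ((j : ℝ) - (i : ℝ))) *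
      branchF θ (ν i.castSucc - μ j + θ * ((j : ℝ) - (i : ℝ))))

/-- On the diagonal the first factor of `branchingFactor` is the constant `branchF θ 0 = Γ(θ)⁻¹`,
which is not rescaled. -/
noncomputable def branchingFactorLimit (θ : ℝ) (z : Fin κ → ℝ) (y : Fin (κ + 1) → ℝ)
    (i j : Fin κ) : ℝ :=
  (if i = j then (Gamma θ)⁻¹ else (z i - z j) ^ (1 - θ)) * (y i.castSucc - y j.succ) ^ (1 - θ) /
    ((z i - y j.succ) ^ (1 - θ) * (y i.castSucc - z j) ^ (1 - θ))

theorem ite_inv_mul_branchingFactor {q : ℝ} (hq : q ≠ 0) (θ : ℝ) (μ : Fin κ → ℝ)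
    (ν : Fin (κ + 1) → ℝ) (i j : Fin κ) :
    (if i = j then q⁻¹ else 1) * branchingFactor θ μ ν i j =
      (if i = j then (Gamma θ)⁻¹ else q * branchF θ (μ i - μ j + θ * ((j : ℝ) - (i : ℝ)))) *
          (q * branchF θ (ν i.castSucc - ν j.succ + θ * ((j : ℝ) - (i : ℝ)))) /
        (q * branchF θ (μ i - ν j.succ + θ * ((j : ℝ) - (i : ℝ))) *
          (q * branchF θ (ν i.castSucc - μ j + θ * ((j : ℝ) - (i : ℝ))))) := by
  unfold branchingFactor
  split_ifs with hij
  · subst hij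
    rw [sub_self, sub_self, mul_zero, add_zero, branchF_zero, mul_mul_div_mul_mul_eq_inv_mul hq]
  · rw [one_mul, mul_mul_div_mul_mul_cancel_left hq]

theorem tendsto_ite_inv_mul_branchingFactor {θ : ℝ} (hθ : 0 ≤ θ) {y : Fin (κ + 1) → ℝ}
    {z : Fin κ → ℝ} (hyz : ∀ m : Fin κ, z m < y m.castSucc ∧ y m.succ < z m)
    {ι : Type*} {l : Filter ι} {s c : ι → ℝ} (hs : Tendsto s l (𝓝[>] 0))
    {ν : ι → Fin (κ + 1) → ℝ} (hν : ∀ i, Tendsto (fun n => s n * (ν n i - c n)) l (𝓝 (y i)))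
    {μ : ι → Fin κ → ℝ} (hμ : ∀ i, Tendsto (fun n => s n * (μ n i - c n)) l (𝓝 (z i)))
    {i j : Fin κ} (hij : i ≤ j) :
    Tendsto (fun n => (if i = j then (s n ^ (1 - θ))⁻¹ else 1) * branchingFactor θ (μ n) (ν n) i j)
      l (𝓝 (branchingFactorLimit θ z y i j)) := by
  have hA : Tendsto (fun n => if i = j then (Gamma θ)⁻¹ else
        s n ^ (1 - θ) * branchF θ (μ n i - μ n j + θ * ((j : ℝ) - (i : ℝ))))
      l (𝓝 (if i = j then (Gamma θ)⁻¹ else (z i - z j) ^ (1 - θ))) := by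
    split_ifs with h
    · exact tendsto_const_nhds
    · exact tendsto_rpow_mul_branchF_sub hθ (strictAnti_lower_of_interlace hyz (hij.lt_of_ne h)) hs
        (hμ i) (hμ j)
  have hB := tendsto_rpow_mul_branchF_sub (t := θ * ((j : ℝ) - (i : ℝ))) hθ
    (strictAnti_upper_of_interlace hyz (Fin.castSucc_lt_succ_iff.2 hij)) hs (hν i.castSucc)
    (hν j.succ)
  have hC := tendsto_rpow_mul_branchF_sub (t := θ * ((j : ℝ) - (i : ℝ))) hθ
    (succ_lt_of_interlace hyz hij) hs (hμ i) (hν j.succ)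
  have hD := tendsto_rpow_mul_branchF_sub (t := θ * ((j : ℝ) - (i : ℝ))) hθ
    (lt_castSucc_of_interlace hyz hij) hs (hν i.castSucc) (hμ j)
  have hCD : (z i - y j.succ) ^ (1 - θ) * (y i.castSucc - z j) ^ (1 - θ) ≠ 0 :=
    (mul_pos (rpow_pos_of_pos (sub_pos.2 (succ_lt_of_interlace hyz hij)) _)
      (rpow_pos_of_pos (sub_pos.2 (lt_castSucc_of_interlace hyz hij)) _)).ne'
  refine ((hA.mul hB).div (hC.mul hD) hCD).congr' ?_
  filter_upwards [hs.eventually eventually_mem_nhdsWithin] with n hn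
  exact (ite_inv_mul_branchingFactor (rpow_pos_of_pos hn _).ne' θ (μ n) (ν n) i j).symm

/-- The absolute values are resolved by the interlacing: `y_j` lies above `z_m` exactly when
`j ≤ m`. -/
theorem prod_prod_branchingFactorLimit {θ : ℝ} {y : Fin (κ + 1) → ℝ} {z : Fin κ → ℝ}
    (hyz : ∀ m : Fin κ, z m < y m.castSucc ∧ y m.succ < z m) :
    ∏ j, ∏ i ∈ Iic j, branchingFactorLimit θ z y i j =
      Gamma θ ^ ((1 : ℝ) - ((κ : ℝ) + 1)) *
        (∏ j : Fin κ, ∏ i ∈ Iio j, (z i - z j) ^ (1 - θ)) *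
        (∏ j : Fin (κ + 1), ∏ i ∈ Iio j, (y i - y j) ^ (1 - θ)) *
        ∏ i : Fin κ, ∏ j : Fin (κ + 1), |z i - y j| ^ (θ - 1) := by
  have habs {d : ℝ} (hd : 0 < d) : |d| ^ (θ - 1) = (d ^ (1 - θ))⁻¹ := by
    rw [abs_of_pos hd, ← rpow_neg hd.le, neg_sub]
  have hW : ∏ i : Fin κ, ∏ j : Fin (κ + 1), |z i - y j| ^ (θ - 1) =
      ((∏ j, ∏ i ∈ Iic j, (z i - y j.succ) ^ (1 - θ)) *
        ∏ j, ∏ i ∈ Iic j, (y i.castSucc - z j) ^ (1 - θ))⁻¹ := by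
    rw [prod_comm' (s' := fun i => Ici i) (t' := univ) (by simp), ← prod_mul_distrib,
      ← prod_inv_distrib]
    refine prod_congr rfl fun m _ => ?_
    rw [Fin.prod_univ_eq_prod_Iic_castSucc_mul_prod_Ici_succ _ m, mul_inv, mul_comm,
      ← prod_inv_distrib, ← prod_inv_distrib]
    congr 1 <;> refine prod_congr rfl fun i hi => ?_
    · rw [habs (sub_pos.2 (succ_lt_of_interlace hyz (mem_Ici.1 hi)))]
    · rw [abs_sub_comm, habs (sub_pos.2 (lt_castSucc_of_interlace hyz (mem_Iic.1 hi)))]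
  have hΓ : Gamma θ ^ ((1 : ℝ) - ((κ : ℝ) + 1)) = (Gamma θ)⁻¹ ^ κ := by
    rw [show (1 : ℝ) - ((κ : ℝ) + 1) = ((-κ : ℤ) : ℝ) by push_cast; ring, rpow_intCast,
      zpow_neg, zpow_natCast, inv_pow]
  simp only [branchingFactorLimit, prod_div_distrib, prod_mul_distrib,
    prod_prod_Iic_ite_eq, Fintype.card_fin]
  rw [hW, hΓ, Fin.prod_prod_Iio_eq_prod_prod_Iic, div_eq_mul_inv]

end Branching

theorem jack_branching_asymptotics_general (κ : ℕ) (θ c : ℝ) (hθ : 0 < θ)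
    (y : Fin (κ + 1) → ℝ) (z : Fin κ → ℝ)
    (hyz : ∀ m : Fin κ, z m < y m.castSucc ∧ y m.succ < z m)
    (ε : ℕ → ℝ) (hεpos : ∀ n, 0 < ε n) (hε0 : Tendsto ε atTop (nhds 0))
    (ν : ℕ → Fin (κ + 1) → ℕ)
    (μ : ℕ → Fin κ → ℕ)
    (hνconv : ∀ i : Fin (κ + 1),
      Tendsto (fun n => (ε n) ^ ((1 : ℝ) / 2) * ((ν n i : ℝ) - c / ε n)) atTop (nhds (y i)))
    (hμconv : ∀ i : Fin κ,
      Tendsto (fun n => (ε n) ^ ((1 : ℝ) / 2) * ((μ n i : ℝ) - c / ε n)) atTop (nhds (z i))) :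
    Tendsto (fun n => (ε n) ^ (-((κ : ℝ) * (1 - θ)) / 2) *
        ∏ j : Fin κ, ∏ i ∈ Finset.Iic j,
          (branchF θ ((μ n i : ℝ) - (μ n j : ℝ) + θ * ((j : ℝ) - (i : ℝ))) *
              branchF θ ((ν n i.castSucc : ℝ) - (ν n j.succ : ℝ) + θ * ((j : ℝ) - (i : ℝ)))) /
            (branchF θ ((μ n i : ℝ) - (ν n j.succ : ℝ) + θ * ((j : ℝ) - (i : ℝ))) *
              branchF θ ((ν n i.castSucc : ℝ) - (μ n j : ℝ) + θ * ((j : ℝ) - (i : ℝ)))))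
      atTop
      (nhds (Real.Gamma θ ^ ((1 : ℝ) - ((κ : ℝ) + 1)) *
        (∏ j : Fin κ, ∏ i ∈ Finset.Iio j, (z i - z j) ^ (1 - θ)) *
        (∏ j : Fin (κ + 1), ∏ i ∈ Finset.Iio j, (y i - y j) ^ (1 - θ)) *
        ∏ i : Fin κ, ∏ j : Fin (κ + 1), |z i - y j| ^ (θ - 1))) := by
  set s : ℕ → ℝ := fun n => ε n ^ ((1 : ℝ) / 2)
  have hs : Tendsto s atTop (𝓝[>] 0) := by
    refine tendsto_nhdsWithin_iff.2 ⟨?_, .of_forall fun n => rpow_pos_of_pos (hεpos n) _⟩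
    simpa [s] using hε0.rpow_const (p := (1 : ℝ) / 2) (Or.inr (by norm_num))
  have hprefactor (n : ℕ) : ε n ^ (-((κ : ℝ) * (1 - θ)) / 2) = ((s n ^ (1 - θ))⁻¹) ^ κ := by
    rw [← rpow_mul (hεpos n).le, ← rpow_neg (hεpos n).le, ← rpow_natCast,
      ← rpow_mul (hεpos n).le]
    ring_nf
  have hlim := tendsto_finsetProd univ fun j _ => tendsto_finsetProd (Iic j) fun i hi =>
    tendsto_ite_inv_mul_branchingFactor hθ.le hyz hs hνconv hμconv (mem_Iic.1 hi)
  rw [← prod_prod_branchingFactorLimit hyz]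
  refine hlim.congr fun n => ?_
  simp only [prod_mul_distrib, prod_prod_Iic_ite_eq, prod_const_one, mul_one, Fintype.card_fin,
    hprefactor]
  rfl

/-- **Asymptotics of the Jack branching coefficients.** Here `k = κ+1 ≥ 2`; the configuration
`y : Fin (κ+1) → ℝ` plays the role of `ŷ^k` and `z : Fin κ → ℝ` of `ŷ^{k−1}`, strictly
interlacing as `y_1 > z_1 > y_2 > ⋯ > z_{k−1} > y_k`. If `ε_n → 0⁺` and the partitions
`ν(n)` (with `k` rows) and `μ(n)` (with `k−1` rows), `μ(n)` interlacing `ν(n)`, satisfy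
`ε_n^{1/2}(ν_i(n) − c/ε_n) → y_i` and `ε_n^{1/2}(μ_i(n) − c/ε_n) → z_i`, then
`ε_n^{−(k−1)(1−θ)/2} ∏_{1≤i≤j≤k−1} f(μ_i−μ_j+θ(j−i)) f(ν_i−ν_{j+1}+θ(j−i)) /
  [f(μ_i−ν_{j+1}+θ(j−i)) f(ν_i−μ_j+θ(j−i))]` converges to
`Γ(θ)^{1−k} ∏_{i<j≤k−1}(z_i−z_j)^{1−θ} ∏_{i<j≤k}(y_i−y_j)^{1−θ} ∏_{i,j}|z_i−y_j|^{θ−1}`. -/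
theorem jack_branching_asymptotics (κ : ℕ) (hκ : 1 ≤ κ) (θ c : ℝ) (hθ : 0 < θ) (hc : 0 < c)
    (y : Fin (κ + 1) → ℝ) (z : Fin κ → ℝ)
    (hyz : ∀ m : Fin κ, z m < y m.castSucc ∧ y m.succ < z m)
    (ε : ℕ → ℝ) (hεpos : ∀ n, 0 < ε n) (hε0 : Tendsto ε atTop (nhds 0))
    (ν : ℕ → Fin (κ + 1) → ℕ) (hν : ∀ n, Antitone (ν n))
    (μ : ℕ → Fin κ → ℕ) (hμ : ∀ n, Antitone (μ n))
    (hint : ∀ n, ∀ m : Fin κ, μ n m ≤ ν n m.castSucc ∧ ν n m.succ ≤ μ n m)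
    (hνconv : ∀ i : Fin (κ + 1),
      Tendsto (fun n => (ε n) ^ ((1 : ℝ) / 2) * ((ν n i : ℝ) - c / ε n)) atTop (nhds (y i)))
    (hμconv : ∀ i : Fin κ,
      Tendsto (fun n => (ε n) ^ ((1 : ℝ) / 2) * ((μ n i : ℝ) - c / ε n)) atTop (nhds (z i))) :
    Tendsto (fun n => (ε n) ^ (-((κ : ℝ) * (1 - θ)) / 2) *
        ∏ j : Fin κ, ∏ i ∈ Finset.Iic j,
          (branchF θ ((μ n i : ℝ) - (μ n j : ℝ) + θ * ((j : ℝ) - (i : ℝ))) *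
              branchF θ ((ν n i.castSucc : ℝ) - (ν n j.succ : ℝ) + θ * ((j : ℝ) - (i : ℝ)))) /
            (branchF θ ((μ n i : ℝ) - (ν n j.succ : ℝ) + θ * ((j : ℝ) - (i : ℝ))) *
              branchF θ ((ν n i.castSucc : ℝ) - (μ n j : ℝ) + θ * ((j : ℝ) - (i : ℝ)))))
      atTop
      (nhds (Real.Gamma θ ^ ((1 : ℝ) - ((κ : ℝ) + 1)) *
        (∏ j : Fin κ, ∏ i ∈ Finset.Iio j, (z i - z j) ^ (1 - θ)) *
        (∏ j : Fin (κ + 1), ∏ i ∈ Finset.Iio j, (y i - y j) ^ (1 - θ)) *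
        ∏ i : Fin κ, ∏ j : Fin (κ + 1), |z i - y j| ^ (θ - 1))) :=
  jack_branching_asymptotics_general κ θ c hθ y z hyz ε hεpos hε0 ν μ hνconv hμconv
end
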